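/- Let n and k be positive integers and let p = (⌈(n-1)/(2k)⌉ - 1)·k + 1. Then the geodetic number of the Kneser graph K(2n+k,n) satisfies gn(K(2n+k,n)) ≤ 1 + Σ_{i=p}^{p+H(n,k)} C(n,i)·C(n+k, n-i), where C(a,b) denotes the binomial coefficient. -/

import Mathlib

/-- The Kneser graph `K(m, n)`: vertices are the `n`-element subsets of an `m`-element
ground set, with edges between disjoint sets. -/
def KneserGraph (m n : ℕ) : SimpleGraph {s : Finset (Fin m) // s.card = n} where
  Adj u v := Disjoint u.1 v.1 ∧ u ≠ v
  symm := ⟨fun u v ⟨h, hne⟩ => ⟨h.symm, hne.symm⟩⟩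
  loopless := ⟨fun u ⟨_, h⟩ => h rfl⟩

/-- The geodetic interval `I[u,v]`: all vertices lying on some shortest `u,v`-path. -/
def geodInterval {V : Type*} (G : SimpleGraph V) (u v : V) : Set V :=
  {w | G.dist u w + G.dist w v = G.dist u v}

/-- `I[W] = ⋃_{u,v ∈ W} I[u,v]`. -/
def geodIntervalSet {V : Type*} (G : SimpleGraph V) (W : Set V) : Set V :=
  ⋃ (u ∈ W) (v ∈ W), geodInterval G u v

/-- `W` is a geodetic set if `I[W] = V(G)`. -/
def IsGeodeticSet {V : Type*} (G : SimpleGraph V) (W : Set V) : Prop :=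
  geodIntervalSet G W = Set.univ

/-- `W` is geodetically convex if `I[W] = W`. -/
def IsGConvex {V : Type*} (G : SimpleGraph V) (W : Set V) : Prop :=
  geodIntervalSet G W = W

/-- The geodetic hull `H[W]`: the smallest g-convex set containing `W`. -/
def geodHull {V : Type*} (G : SimpleGraph V) (W : Set V) : Set V :=
  ⋂₀ {C | IsGConvex G C ∧ W ⊆ C}

/-- `W` is a geodetic hull set if `H[W] = V(G)`. -/
def IsGeodHullSet {V : Type*} (G : SimpleGraph V) (W : Set V) : Prop :=
  geodHull G W = Set.univ

/-- The geodetic number: minimum cardinality of a geodetic set. -/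
noncomputable def geodeticNumber {V : Type*} (G : SimpleGraph V) : ℕ :=
  sInf {m | ∃ W : Set V, IsGeodeticSet G W ∧ W.ncard = m}

/-- The geodetic hull number: minimum cardinality of a geodetic hull set. -/
noncomputable def geodHullNumber {V : Type*} (G : SimpleGraph V) : ℕ :=
  sInf {m | ∃ W : Set V, IsGeodHullSet G W ∧ W.ncard = m}

/-- The function `H(n,k)` from the paper. -/
def Hfun (n k : ℕ) : ℕ := if n % k ≤ 1 then n % k + k - 2 else n % k - 2

/-- `p = (⌈(n-1)/(2k)⌉ - 1)·k + 1`, computed in `ℤ`. -/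
def pInt (n k : ℕ) : ℤ := (⌈((n : ℚ) - 1) / (2 * k)⌉ - 1) * k + 1

/-- Binomial coefficient with an integer lower index, zero when the index is negative. -/
def zchoose (a : ℕ) (b : ℤ) : ℕ := if b < 0 then 0 else a.choose b.toNat

/-! Fix a vertex `u`. The distance between two vertices depends only on the size `s` of their
intersection (`kneserDist`), and the neighbours of a vertex meeting `u` in `s` points realise exactly
the intersection sizes `n - k - s, …, n - s` with `u`. Comparing distances over this range shows
that a vertex meeting `u` in a number of points outside `[p, p + H(n,k)]` has a neighbour farther
from `u`. Walking away from `u` from any vertex `w` therefore ends in one of these layers, along a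
geodesic from `u` through `w`; so `u` together with these layers is a geodetic set, and the layer
of intersection size `i` has `C(n,i) C(n+k,n-i)` vertices. -/

open Finset

namespace Nat

lemma lt_ceilDiv_iff_mul_lt {k t c : ℕ} (hk : 0 < k) : t < c ⌈/⌉ k ↔ t * k < c := by
  rw [← not_le, ceilDiv_le_iff_le_mul hk, not_le, mul_comm]

lemma le_ceilDiv_iff_mul_lt {k t c : ℕ} (hk : 0 < k) : t ≤ c ⌈/⌉ k ↔ t * k < c + k := by
  rcases t with _ | t
  · simp only [Nat.zero_le, zero_mul, true_iff]
    omega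
  · rw [Nat.add_one_le_iff, lt_ceilDiv_iff_mul_lt hk, Nat.succ_mul]
    omega

end Nat

/-- The distance in `K(2n+k, n)` between two vertices meeting in `s` points
(Valencia-Pabon and Vera). -/
def kneserDist (n k s : ℕ) : ℕ := min (2 * ((n - s) ⌈/⌉ k)) (2 * (s ⌈/⌉ k) + 1)

section kneserDist

variable {n k s s' t : ℕ}

@[simp]
lemma kneserDist_self : kneserDist n k n = 0 := by
  simp [kneserDist]

lemma two_mul_le_kneserDist_iff (hk : 0 < k) :
    2 * t ≤ kneserDist n k s ↔ t * k < s + k ∧ t * k < n - s + k := by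
  rw [kneserDist, le_min_iff, ← Nat.le_ceilDiv_iff_mul_lt hk, ← Nat.le_ceilDiv_iff_mul_lt hk]
  omega

lemma two_mul_add_one_le_kneserDist_iff (hk : 0 < k) :
    2 * t + 1 ≤ kneserDist n k s ↔ t * k < s + k ∧ t * k < n - s := by
  rw [kneserDist, le_min_iff, ← Nat.le_ceilDiv_iff_mul_lt hk, ← Nat.lt_ceilDiv_iff_mul_lt hk]
  omega

lemma kneserDist_le_succ (hk : 0 < k) (h₁ : s + s' ≤ n) (h₂ : n ≤ s + s' + k) :
    kneserDist n k s ≤ kneserDist n k s' + 1 := by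
  obtain ⟨t, ht | ht⟩ := Nat.even_or_odd' (kneserDist n k s')
  · have h' : ¬ 2 * t + 1 ≤ kneserDist n k s' := by omega
    have h : ¬ 2 * (t + 1) ≤ kneserDist n k s := by
      rw [two_mul_add_one_le_kneserDist_iff hk] at h'
      rw [two_mul_le_kneserDist_iff hk, Nat.succ_mul]
      omega
    omega
  · have h' : ¬ 2 * (t + 1) ≤ kneserDist n k s' := by omega
    have h : ¬ 2 * (t + 1) + 1 ≤ kneserDist n k s := by
      rw [two_mul_le_kneserDist_iff hk, Nat.succ_mul] at h'
      rw [two_mul_add_one_le_kneserDist_iff hk, Nat.succ_mul]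
      omega
    omega

lemma exists_kneserDist_lt (hk : 0 < k) (hs : s < n) :
    ∃ s', s' + s ≤ n ∧ n ≤ s' + k + s ∧ kneserDist n k s' < kneserDist n k s := by
  obtain ⟨t, ht | ht⟩ := Nat.even_or_odd' (kneserDist n k s)
  · have hge := (two_mul_le_kneserDist_iff hk).mp ht.ge
    have hlt : ¬ 2 * t + 1 ≤ kneserDist n k s := by omega
    rw [two_mul_add_one_le_kneserDist_iff hk] at hlt
    obtain rfl | ht₀ := Nat.eq_zero_or_pos t
    · omega
    have hkt : k ≤ t * k := Nat.le_mul_of_pos_left k ht₀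
    refine ⟨n - (k + s), by omega, by omega, ?_⟩
    have : ¬ 2 * t ≤ kneserDist n k (n - (k + s)) := by
      rw [two_mul_le_kneserDist_iff hk]
      omega
    omega
  · have hge := (two_mul_add_one_le_kneserDist_iff hk).mp ht.ge
    have hlt : ¬ 2 * (t + 1) ≤ kneserDist n k s := by omega
    rw [two_mul_le_kneserDist_iff hk, Nat.succ_mul] at hlt
    refine ⟨n - s, by omega, by omega, ?_⟩
    have : ¬ 2 * t + 1 ≤ kneserDist n k (n - s) := by
      rw [two_mul_add_one_le_kneserDist_iff hk]
      omega
    omega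

end kneserDist

lemma pInt_eq {n k : ℕ} (a : ℤ) (h₁ : 2 * a * k < n - 1) (h₂ : n - 1 ≤ 2 * (a + 1) * k) :
    pInt n k = a * k + 1 := by
  have h₁' : (2 * a * k : ℚ) < n - 1 := by exact_mod_cast h₁
  have h₂' : (n - 1 : ℚ) ≤ 2 * (a + 1) * k := by exact_mod_cast h₂
  have hk : (0 : ℚ) < 2 * k := by nlinarith
  have hceil : ⌈((n : ℚ) - 1) / (2 * k)⌉ = a + 1 := by
    rw [Int.ceil_eq_iff, lt_div_iff₀ hk, div_le_iff₀ hk]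
    push_cast
    constructor <;> linarith
  rw [pInt, hceil]
  ring

lemma Hfun_eq_emod {n k : ℕ} (hk : 0 < k) : (Hfun n k : ℤ) = ((n : ℤ) - 2) % k := by
  have hn := Nat.div_add_mod n k
  have hr := Nat.mod_lt n hk
  rw [Hfun]
  generalize n / k = q at hn
  generalize n % k = r at hn hr ⊢
  subst hn
  push_cast
  rw [show (k * q + r : ℤ) - 2 = r - 2 + k * q by ring, Int.add_mul_emod_self_left]
  split_ifs with h
  · obtain rfl | hk2 : k = 1 ∨ 2 ≤ k := by omega
    · rw [Nat.cast_one, Int.emod_one]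
      omega
    · rw [← Int.add_emod_right, Int.emod_eq_of_lt (by omega) (by omega)]
      omega
  · rw [Int.emod_eq_of_lt (by omega) (by omega)]
    omega

lemma Hfun_eq {n k : ℕ} (hk : 0 < k) (m : ℤ) (h₁ : m * k + 2 ≤ n)
    (h₂ : n ≤ (m + 1) * k + 1) :
    (Hfun n k : ℤ) = n - 2 - m * k := by
  rw [Hfun_eq_emod hk, ← Int.sub_mul_emod_self_right _ m,
    Int.emod_eq_of_lt (by linarith) (by linarith)]

/-- Here `a + b + 2` stands for `kneserDist n k s` (compare the two `_le_kneserDist_iff` lemmas)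
and `hn` says that it is at least the diameter `⌈(n - 1) / k⌉ + 1`: the layers `[p, p + H]` are
those at maximal distance. -/
lemma mem_Icc_pInt {n k s : ℕ} (hk : 0 < k) (a b : ℤ) (hab : a ≤ b) (hba : b ≤ a + 1)
    (hs : a * k < s) (hsn : s + b * k < n) (hn : n ≤ (a + b + 1) * k + 1) :
    (s : ℤ) ∈ Icc (pInt n k) (pInt n k + Hfun n k) := by
  have hk' : (0 : ℤ) < k := by exact_mod_cast hk
  have hak : a * k ≤ b * k := by nlinarith
  have hbk : b * k ≤ (a + 1) * k := by nlinarith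
  rw [pInt_eq a (by linarith) (by linarith), Hfun_eq hk (a + b) (by linarith) (by linarith),
    mem_Icc]
  constructor <;> linarith

lemma exists_lt_kneserDist {n k s : ℕ} (hn : 0 < n) (hk : 0 < k) (hs : s ≤ n)
    (hwin : (s : ℤ) ∉ Icc (pInt n k) (pInt n k + Hfun n k)) :
    ∃ s', s' + s ≤ n ∧ n ≤ s' + k + s ∧ kneserDist n k s < kneserDist n k s' := by
  obtain ⟨t, ht | ht⟩ := Nat.even_or_odd' (kneserDist n k s)
  · have hge := (two_mul_le_kneserDist_iff hk).mp ht.ge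
    have hlt : ¬ 2 * t + 1 ≤ kneserDist n k s := by omega
    rw [two_mul_add_one_le_kneserDist_iff hk] at hlt
    obtain rfl | ht₀ := Nat.eq_zero_or_pos t
    · refine ⟨0, by omega, by omega, ?_⟩
      have : 2 * 0 + 1 ≤ kneserDist n k 0 := (two_mul_add_one_le_kneserDist_iff hk).mpr (by omega)
      omega
    have hkt : k ≤ t * k := Nat.le_mul_of_pos_left k ht₀
    have hroom : 2 * (t * k) + 2 ≤ n + k := by
      by_contra h
      refine hwin (mem_Icc_pInt hk (t - 1) (t - 1) le_rfl (by omega) ?_ ?_ ?_) <;>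
        push_cast [add_mul, sub_mul, one_mul] <;> omega
    refine ⟨max (n - (k + s)) (t * k + 1 - k), by omega, by omega, ?_⟩
    have : 2 * t + 1 ≤ kneserDist n k (max (n - (k + s)) (t * k + 1 - k)) := by
      rw [two_mul_add_one_le_kneserDist_iff hk]
      omega
    omega
  · have hge := (two_mul_add_one_le_kneserDist_iff hk).mp ht.ge
    have hlt : ¬ 2 * (t + 1) ≤ kneserDist n k s := by omega
    rw [two_mul_le_kneserDist_iff hk, Nat.succ_mul] at hlt
    have hroom : 2 * (t * k) + 2 ≤ n := by
      by_contra h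
      refine hwin (mem_Icc_pInt hk (t - 1) t (by omega) (by omega) ?_ ?_ ?_) <;>
        push_cast [add_mul, sub_mul, one_mul] <;> omega
    refine ⟨max (n - (k + s)) (t * k + 1), by omega, by omega, ?_⟩
    have : 2 * (t + 1) ≤ kneserDist n k (max (n - (k + s)) (t * k + 1)) := by
      rw [two_mul_le_kneserDist_iff hk, Nat.succ_mul]
      omega
    omega

theorem isGeodeticSet_insert_of_exists_adj_dist_lt {V : Type*} [Finite V] {G : SimpleGraph V}
    (u : V) (T : Set V) (h : ∀ w ∉ T, ∃ w', G.Adj w w' ∧ G.dist u w < G.dist u w') :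
    IsGeodeticSet G (insert u T) := by
  let farther : V → V → Prop := fun a b => G.dist u b < G.dist u a
  have : IsTrans V farther := ⟨fun _ _ _ h₁ h₂ => h₂.trans h₁⟩
  have : Std.Irrefl farther := ⟨fun _ => lt_irrefl _⟩
  have key (w : V) : ∃ v ∈ T, w ∈ geodInterval G u v := by
    induction w using (Finite.wellFounded_of_trans_of_irrefl farther).induction with | _ w ih
    by_cases hw : w ∈ T
    · exact ⟨w, hw, by simp [geodInterval]⟩
    obtain ⟨w', hadj, hlt⟩ := h w hw
    obtain ⟨v, hv, hw'v⟩ := ih w' hlt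
    have hw'v : G.dist u w' + G.dist w' v = G.dist u v := hw'v
    have hreach : G.Reachable u w :=
      (SimpleGraph.Reachable.of_dist_ne_zero (by omega)).trans hadj.symm.reachable
    have hww' := SimpleGraph.dist_eq_one_iff_adj.mpr hadj
    have h₁ := hadj.reachable.dist_triangle_left v
    have h₂ := hadj.reachable.dist_triangle_right u
    exact ⟨v, hv, le_antisymm (by omega) (hreach.dist_triangle_left v)⟩
  refine Set.eq_univ_of_forall fun w => ?_
  obtain ⟨v, hv, hwv⟩ := key w
  exact Set.mem_iUnion₂.2
    ⟨u, Set.mem_insert _ _, Set.mem_iUnion₂.2 ⟨v, Set.mem_insert_of_mem _ hv, hwv⟩⟩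

theorem geodeticNumber_le_ncard {V : Type*} {G : SimpleGraph V} {W : Set V}
    (h : IsGeodeticSet G W) : geodeticNumber G ≤ W.ncard :=
  Nat.sInf_le ⟨W, h, rfl⟩

namespace KneserGraph

abbrev Vertex (m n : ℕ) := {s : Finset (Fin m) // #s = n}

section
variable {m n : ℕ}

lemma card_inter_le (a b : Vertex m n) : #(a.1 ∩ b.1) ≤ n :=
  (card_le_card inter_subset_left).trans a.2.le

lemma eq_of_le_card_inter {a b : Vertex m n} (h : n ≤ #(a.1 ∩ b.1)) : a = b :=
  Subtype.ext <| (eq_of_subset_of_card_le inter_subset_left (a.2.le.trans h)).symm.trans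
    (eq_of_subset_of_card_le inter_subset_right (b.2.le.trans h))

lemma adj_of_disjoint (hn : 0 < n) {a b : Vertex m n} (h : Disjoint a.1 b.1) :
    (KneserGraph m n).Adj a b := by
  refine ⟨h, fun hab => ?_⟩
  subst hab
  have := a.2
  rw [disjoint_self.mp h, bot_eq_empty, card_empty] at this
  omega

lemma card_inter_add_card_inter_le {a x : Vertex m n} (h : Disjoint a.1 x.1) (b : Vertex m n) :
    #(a.1 ∩ b.1) + #(x.1 ∩ b.1) ≤ n :=
  calc #(a.1 ∩ b.1) + #(x.1 ∩ b.1) = #(a.1 ∩ b.1 ∪ x.1 ∩ b.1) :=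
        (card_union_of_disjoint (h.mono inter_subset_left inter_subset_left)).symm
    _ ≤ #b.1 := card_le_card (union_subset inter_subset_right inter_subset_right)
    _ = n := b.2

lemma card_filter_card_inter_eq_le (u : Vertex m n) (j : ℕ) :
    #{v : Vertex m n | #(u.1 ∩ v.1) = j} ≤ n.choose j * (m - n).choose (n - j) :=
  calc #{v : Vertex m n | #(u.1 ∩ v.1) = j}
      ≤ #(u.1.powersetCard j ×ˢ u.1ᶜ.powersetCard (n - j)) := by
        refine card_le_card_of_injOn (fun v => (v.1 ∩ u.1, v.1 \ u.1)) (fun v hv => ?_) ?_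
        · have hv : #(u.1 ∩ v.1) = j := (mem_filter.mp hv).2
          have := card_sdiff_add_card_inter v.1 u.1
          simp only [coe_product, Set.mem_prod, mem_coe, mem_powersetCard, inter_comm v.1]
            at this ⊢
          refine ⟨⟨inter_subset_left, hv⟩, fun x hx => ?_, by omega⟩
          simpa using (mem_sdiff.mp hx).2
        · intro v _ w _ hvw
          simp only [Prod.mk.injEq] at hvw
          rw [Subtype.ext_iff, ← sdiff_union_inter v.1 u.1, ← sdiff_union_inter w.1 u.1,
            hvw.1, hvw.2]
    _ = n.choose j * (m - n).choose (n - j) := by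
        rw [card_product, card_powersetCard, card_powersetCard, card_compl, Fintype.card_fin, u.2]

end

variable {n k : ℕ}

lemma le_card_inter_add_card_inter_add {a x : Vertex (2 * n + k) n} (h : Disjoint a.1 x.1)
    (b : Vertex (2 * n + k) n) : n ≤ #(a.1 ∩ b.1) + #(x.1 ∩ b.1) + k := by
  have hcompl : #(a.1 ∪ x.1)ᶜ = k := by
    rw [card_compl, card_union_of_disjoint h, a.2, x.2, Fintype.card_fin]
    omega
  calc n = #b.1 := b.2.symm
    _ ≤ #((a.1 ∩ b.1 ∪ x.1 ∩ b.1) ∪ (a.1 ∪ x.1)ᶜ) := card_le_card fun y hy => by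
        by_cases ha : y ∈ a.1 <;> by_cases hx : y ∈ x.1 <;> simp [ha, hx, hy]
    _ ≤ #(a.1 ∩ b.1 ∪ x.1 ∩ b.1) + #(a.1 ∪ x.1)ᶜ := card_union_le _ _
    _ ≤ #(a.1 ∩ b.1) + #(x.1 ∩ b.1) + k := by
        rw [hcompl]
        gcongr
        exact card_union_le _ _

lemma exists_adj_card_inter_eq (hn : 0 < n) (u w : Vertex (2 * n + k) n) {s : ℕ}
    (h₁ : s + #(u.1 ∩ w.1) ≤ n) (h₂ : n ≤ s + k + #(u.1 ∩ w.1)) :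
    ∃ w', (KneserGraph (2 * n + k) n).Adj w w' ∧ #(u.1 ∩ w'.1) = s := by
  have hsdiff := card_sdiff_add_card_inter u.1 w.1
  have hcompl : #(u.1 ∪ w.1)ᶜ = k + #(u.1 ∩ w.1) := by
    have := card_union_add_card_inter u.1 w.1
    rw [u.2, w.2] at this
    rw [card_compl, Fintype.card_fin]
    omega
  obtain ⟨X, hXu, hX⟩ := exists_subset_card_eq (s := u.1 \ w.1) (n := s) (by omega)
  obtain ⟨Y, hYu, hY⟩ := exists_subset_card_eq (s := (u.1 ∪ w.1)ᶜ) (n := n - s) (by omega)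
  have huY : Disjoint u.1 Y := disjoint_compl_right.mono subset_union_left hYu
  have hwY : Disjoint w.1 Y := disjoint_compl_right.mono subset_union_right hYu
  have hXY : Disjoint X Y := huY.mono_left (hXu.trans sdiff_subset)
  have hwX : Disjoint w.1 X := disjoint_sdiff.mono_right hXu
  refine ⟨⟨X ∪ Y, by rw [card_union_of_disjoint hXY]; omega⟩,
    adj_of_disjoint hn (disjoint_union_right.mpr ⟨hwX, hwY⟩), ?_⟩
  change #(u.1 ∩ (X ∪ Y)) = s
  rw [inter_union_distrib_left, inter_eq_right.mpr (hXu.trans sdiff_subset),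
    disjoint_iff_inter_eq_empty.mp huY, union_empty, hX]

lemma kneserDist_le_length (hk : 0 < k) {a b : Vertex (2 * n + k) n}
    (p : (KneserGraph (2 * n + k) n).Walk a b) : kneserDist n k #(a.1 ∩ b.1) ≤ p.length := by
  induction p with
  | @nil a => simp [a.2]
  | @cons a x b h q ih =>
    have := kneserDist_le_succ hk (card_inter_add_card_inter_le h.1 b)
      (le_card_inter_add_card_inter_add h.1 b)
    rw [SimpleGraph.Walk.length_cons]
    omega

lemma exists_walk_length_le_kneserDist (hn : 0 < n) (hk : 0 < k) (a b : Vertex (2 * n + k) n) :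
    ∃ p : (KneserGraph (2 * n + k) n).Walk a b, p.length ≤ kneserDist n k #(a.1 ∩ b.1) := by
  induction hd : kneserDist n k #(a.1 ∩ b.1) using Nat.strong_induction_on generalizing a with
  | _ d ih
  obtain hab | hlt := (card_inter_le a b).eq_or_lt
  · obtain rfl := eq_of_le_card_inter hab.ge
    exact ⟨.nil, by simp⟩
  obtain ⟨s', h₁, h₂, hs'⟩ := exists_kneserDist_lt hk hlt
  obtain ⟨a', hadj, ha'⟩ := exists_adj_card_inter_eq hn b a (s := s')
    (by rwa [inter_comm]) (by rwa [inter_comm])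
  rw [inter_comm] at ha'
  obtain ⟨p, hp⟩ := ih (kneserDist n k s') (by omega) a' (by rw [ha'])
  exact ⟨.cons hadj p, by rw [SimpleGraph.Walk.length_cons]; omega⟩

theorem dist_eq_kneserDist (hn : 0 < n) (hk : 0 < k) (a b : Vertex (2 * n + k) n) :
    (KneserGraph (2 * n + k) n).dist a b = kneserDist n k #(a.1 ∩ b.1) := by
  obtain ⟨p, hp⟩ := exists_walk_length_le_kneserDist hn hk a b
  obtain ⟨q, hq⟩ := p.reachable.exists_walk_length_eq_dist
  exact le_antisymm ((SimpleGraph.dist_le p).trans hp) (hq ▸ kneserDist_le_length hk q)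

lemma exists_adj_dist_lt (hn : 0 < n) (hk : 0 < k) (u w : Vertex (2 * n + k) n)
    (hw : (#(u.1 ∩ w.1) : ℤ) ∉ Icc (pInt n k) (pInt n k + Hfun n k)) :
    ∃ w', (KneserGraph (2 * n + k) n).Adj w w' ∧
      (KneserGraph (2 * n + k) n).dist u w < (KneserGraph (2 * n + k) n).dist u w' := by
  obtain ⟨s', h₁, h₂, hs'⟩ := exists_lt_kneserDist hn hk (card_inter_le u w) hw
  obtain ⟨w', hadj, hw'⟩ := exists_adj_card_inter_eq hn u w h₁ h₂
  exact ⟨w', hadj, by rwa [dist_eq_kneserDist hn hk, dist_eq_kneserDist hn hk, hw']⟩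

lemma card_filter_card_inter_eq_le_zchoose (u : Vertex (2 * n + k) n) (i : ℤ) :
    #{v : Vertex (2 * n + k) n | (#(u.1 ∩ v.1) : ℤ) = i} ≤
      zchoose n i * zchoose (n + k) (n - i) := by
  obtain hi | ⟨j, rfl⟩ := lt_or_ge i 0 |>.imp id Int.eq_ofNat_of_zero_le
  · refine (card_eq_zero.mpr (filter_eq_empty_iff.mpr fun v _ => ?_)).trans_le (Nat.zero_le _)
    omega
  have hbound := card_filter_card_inter_eq_le u j
  simp only [Nat.cast_inj]
  rcases le_or_gt j n with hj | hj
  · rw [show 2 * n + k - n = n + k by omega] at hbound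
    simpa [zchoose, show ((n : ℤ) - j).toNat = n - j by omega, show ¬ (n : ℤ) < j by omega,
      show ¬ (j : ℤ) < 0 by omega] using hbound
  · simp only [Nat.choose_eq_zero_of_lt hj, zero_mul, Nat.le_zero] at hbound
    simp [hbound]

lemma card_filter_card_inter_mem_Icc_le (u : Vertex (2 * n + k) n) (p q : ℤ) :
    #{v : Vertex (2 * n + k) n | (#(u.1 ∩ v.1) : ℤ) ∈ Icc p q} ≤
      ∑ i ∈ Icc p q, zchoose n i * zchoose (n + k) (n - i) := by
  rw [card_eq_sum_card_fiberwise (f := fun v => (#(u.1 ∩ v.1) : ℤ)) (t := Icc p q)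
    fun v hv => by simpa using hv]
  gcongr with i
  exact (card_le_card (filter_subset_filter _ (filter_subset _ _))).trans
    (card_filter_card_inter_eq_le_zchoose u i)

end KneserGraph

theorem geodeticNumber_le_bound
    (n k : ℕ) (hn : 0 < n) (hk : 0 < k) :
    geodeticNumber (KneserGraph (2 * n + k) n) ≤
      1 + ∑ i ∈ Finset.Icc (pInt n k) (pInt n k + (Hfun n k : ℤ)),
        zchoose n i * zchoose (n + k) ((n : ℤ) - i) := by
  obtain ⟨U, -, hU⟩ := exists_subset_card_eq (s := (univ : Finset (Fin (2 * n + k)))) (n := n)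
    (by rw [card_univ, Fintype.card_fin]; omega)
  let u : KneserGraph.Vertex (2 * n + k) n := ⟨U, hU⟩
  let T : Finset (KneserGraph.Vertex (2 * n + k) n) :=
    {v | (#(u.1 ∩ v.1) : ℤ) ∈ Icc (pInt n k) (pInt n k + Hfun n k)}
  have hgeo : IsGeodeticSet (KneserGraph (2 * n + k) n) ↑(insert u T) := by
    rw [coe_insert]
    exact isGeodeticSet_insert_of_exists_adj_dist_lt u ↑T
      fun w hw => KneserGraph.exists_adj_dist_lt hn hk u w (by simpa [T] using hw)
  calc geodeticNumber (KneserGraph (2 * n + k) n)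
      ≤ #(insert u T) := (geodeticNumber_le_ncard hgeo).trans_eq (Set.ncard_coe_finset _)
    _ ≤ #T + 1 := card_insert_le u T
    _ ≤ _ := by
        rw [add_comm]
        gcongr
        exact KneserGraph.card_filter_card_inter_mem_Icc_le u _ _
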